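/- Let e : ℕ → ℕ satisfy e(n)/n → ∞. Then for all sufficiently large n there exists a simple graph G_n on n vertices with no isolated vertices, at most e(n) edges, and rank_{𝔽₂}(Ā(G_n))/n → 0 as n → ∞; i.e., |E| = ω(n) edges suffice for binary storage codes of rate 1 − o(1). -/

import Mathlib

open Classical in
/-- The augmented adjacency matrix of a simple graph on `Fin n` over `𝔽₂ = ZMod 2`. -/
noncomputable def augAdj {n : ℕ} (G : SimpleGraph (Fin n)) :
    Matrix (Fin n) (Fin n) (ZMod 2) :=
  fun u v => if u = v ∨ G.Adj u v then 1 else 0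

/-!
Split the `n` vertices into about `n / k` cliques, each of size between `k` and `2k`. The
augmented adjacency matrix of a disjoint union of cliques is `M * Mᵀ` for the vertex–clique
incidence matrix `M`, so its rank is at most the number `n / k` of cliques, while the graph
has no isolated vertex and at most `n * k` edges. With `k = min (e n / n) n → ∞` this gives
at most `e n` edges and `rank / n ≤ 1 / k → 0`.
-/

open Finset Filter Matrix

namespace SimpleGraph

variable {V W : Type*}

def fiberGraph (f : V → W) : SimpleGraph V where
  Adj u v := u ≠ v ∧ f u = f v
  symm := ⟨fun _ _ h => ⟨h.1.symm, h.2.symm⟩⟩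
  loopless := ⟨fun _ h => h.1 rfl⟩

theorem neighborFinset_fiberGraph [Fintype V] [DecidableEq V] [DecidableEq W] (f : V → W)
    [DecidableRel (fiberGraph f).Adj] (v : V) :
    (fiberGraph f).neighborFinset v = ({u | f u = f v} : Finset V).erase v := by
  ext u
  rw [mem_neighborFinset, adj_comm]
  simp [fiberGraph]

theorem degree_fiberGraph [Fintype V] [DecidableEq W] (f : V → W)
    [DecidableRel (fiberGraph f).Adj] (v : V) :
    (fiberGraph f).degree v = #{u | f u = f v} - 1 := by
  classical
  rw [← card_neighborFinset_eq_degree, neighborFinset_fiberGraph, card_erase_of_mem (by simp)]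

theorem two_mul_card_edgeFinset_le [Fintype V] (G : SimpleGraph V) [DecidableRel G.Adj]
    {d : ℕ} (h : ∀ v, G.degree v ≤ d) : 2 * #G.edgeFinset ≤ Fintype.card V * d := by
  rw [← sum_degrees_eq_twice_card_edges]
  simpa using Finset.sum_le_sum fun v (_ : v ∈ univ) => h v

end SimpleGraph

theorem Matrix.rank_of_ite_eq_le {V W K : Type*} [Fintype V] [DecidableEq W] [Field K]
    (f : V → W) (s : Finset W) (hf : ∀ v, f v ∈ s) :
    (Matrix.of fun u v => if f u = f v then (1 : K) else 0).rank ≤ #s := by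
  let M : Matrix V s K := Matrix.of fun u i => if f u = i then 1 else 0
  have hM : (Matrix.of fun u v => if f u = f v then (1 : K) else 0) = M * Mᵀ := by
    ext u v
    rw [mul_apply]
    simp only [M, of_apply, transpose_apply, ite_mul, one_mul, zero_mul]
    rw [sum_coe_sort s fun j => if f u = j then if f v = j then 1 else 0 else 0, sum_ite_eq,
      if_pos (hf u)]
    exact if_congr eq_comm rfl rfl
  calc _ = (M * Mᵀ).rank := by rw [hM]
    _ ≤ M.rank := rank_mul_le_left _ _
    _ ≤ Fintype.card s := rank_le_card_width M
    _ = #s := Fintype.card_coe s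

open SimpleGraph

theorem augAdj_fiberGraph {n : ℕ} {W : Type*} [DecidableEq W] (f : Fin n → W) :
    augAdj (fiberGraph f) = Matrix.of fun u v => if f u = f v then 1 else 0 := by
  ext u v
  by_cases h : u = v <;> simp [augAdj, fiberGraph, h]

theorem two_le_card_filter_mod_eq {n q : ℕ} (hq : 0 < q) (h : 2 * q ≤ n) (v : Fin n) :
    2 ≤ #{u : Fin n | (u : ℕ) % q = v % q} := by
  have := Nat.mod_lt v hq
  exact one_lt_card.2
    ⟨⟨v % q, by omega⟩, by simp, ⟨v % q + q, by omega⟩, by simp, by simp [hq.ne']⟩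

theorem card_filter_mod_eq_le {n q m : ℕ} (h : n ≤ m * q) (i : ℕ) :
    #{u : Fin n | (u : ℕ) % q = i} ≤ m := by
  calc _ ≤ #(range m) := card_le_card_of_injOn (fun u : Fin n => (u : ℕ) / q) ?_ ?_
    _ = m := card_range m
  · intro u _
    simpa using Nat.div_lt_of_lt_mul (by rw [mul_comm]; exact u.isLt.trans_le h)
  · intro u hu w hw huw
    simp only [coe_filter, Set.mem_ofPred_eq, mem_univ, true_and] at hu hw
    ext
    rw [← Nat.div_add_mod u q, ← Nat.div_add_mod w q, hu, hw, show (u : ℕ) / q = w / q from huw]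

/-- `n / k` cliques of sizes between `k` and `2 * k`, when `2 ≤ k ≤ n`. -/
abbrev blockCliques (n k : ℕ) : SimpleGraph (Fin n) :=
  fiberGraph fun j : Fin n => (j : ℕ) % (n / k)

theorem degree_blockCliques_pos {n k : ℕ} (hk : 2 ≤ k) (hkn : k ≤ n)
    [DecidableRel (blockCliques n k).Adj] (v : Fin n) :
    0 < (blockCliques n k).degree v := by
  have hq : 0 < n / k := Nat.div_pos hkn (by omega)
  have h2q : 2 * (n / k) ≤ n := (Nat.mul_le_mul_right _ hk).trans (Nat.mul_div_le n k)
  have := two_le_card_filter_mod_eq hq h2q v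
  rw [degree_fiberGraph]
  omega

theorem card_edgeFinset_blockCliques_le {n k : ℕ} (hk : 2 ≤ k) (hkn : k ≤ n)
    [DecidableRel (blockCliques n k).Adj] :
    #(blockCliques n k).edgeFinset ≤ n * k := by
  have hq : 0 < n / k := Nat.div_pos hkn (by omega)
  have hn : n ≤ 2 * k * (n / k) := by
    have := Nat.div_add_mod n k
    have := Nat.mod_lt n (by omega : 0 < k)
    have := Nat.le_mul_of_pos_right k hq
    rw [mul_assoc]
    omega
  have hdeg (v : Fin n) : (blockCliques n k).degree v ≤ 2 * k := by
    rw [degree_fiberGraph]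
    exact (Nat.sub_le _ _).trans (card_filter_mod_eq_le hn _)
  have := two_mul_card_edgeFinset_le _ hdeg
  rw [Fintype.card_fin] at this
  linarith

theorem rank_augAdj_blockCliques_div_le {n k : ℕ} (hk : 0 < k) (hkn : k ≤ n) :
    ((augAdj (blockCliques n k)).rank : ℝ) / n ≤ (k : ℝ)⁻¹ := by
  have hq : 0 < n / k := Nat.div_pos hkn hk
  have hrank : (augAdj (blockCliques n k)).rank ≤ n / k := by
    rw [blockCliques, augAdj_fiberGraph]
    exact (rank_of_ite_eq_le _ (range (n / k)) fun v => mem_range.2 (Nat.mod_lt _ hq)).trans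
      (card_range _).le
  have hn : (0 : ℝ) < n := by exact_mod_cast hk.trans_le hkn
  calc ((augAdj (blockCliques n k)).rank : ℝ) / n ≤ ((n : ℝ) / k) / n := by
        gcongr
        exact (Nat.cast_le.2 hrank).trans Nat.cast_div_le
    _ = (k : ℝ)⁻¹ := by field_simp

open Classical in
/-- If `e n / n → ∞`, then (for all sufficiently large `n`) there are graphs `G n` on
`n` vertices with no isolated vertices and at most `e n` edges such that
`rank(Ā(G n)) / n → 0`, i.e. `ω(n)` edges suffice for storage codes of rate
`1 - o(1)`. -/
theorem exists_graph_seq_few_edges_rate_tendsto_one (e : ℕ → ℕ)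
    (he : Filter.Tendsto (fun n => (e n : ℝ) / n) Filter.atTop Filter.atTop) :
    ∃ (N : ℕ) (G : (n : ℕ) → SimpleGraph (Fin n)),
      (∀ n, N ≤ n →
        (∀ v, 0 < (G n).degree v) ∧ (G n).edgeFinset.card ≤ e n) ∧
      Filter.Tendsto (fun n => ((augAdj (G n)).rank : ℝ) / n)
        Filter.atTop (nhds 0) := by
  have hdiv : Tendsto (fun n => e n / n) atTop atTop := by
    simpa only [Function.comp_def, Nat.floor_div_eq_div] using tendsto_nat_floor_atTop.comp he
  set k : ℕ → ℕ := fun n => min (e n / n) n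
  have hk : Tendsto k atTop atTop := tendsto_atTop.2 fun b =>
    ((tendsto_atTop.1 hdiv b).and (eventually_ge_atTop b)).mono fun n h => le_min h.1 h.2
  obtain ⟨N, hN⟩ := eventually_atTop.1 (hk.eventually_ge_atTop 2)
  have hkn (n : ℕ) : k n ≤ n := min_le_right _ _
  refine ⟨N, fun n => blockCliques n (k n),
    fun n hn => ⟨degree_blockCliques_pos (hN n hn) (hkn n), ?_⟩, ?_⟩
  · calc _ ≤ n * k n := card_edgeFinset_blockCliques_le (hN n hn) (hkn n)
      _ ≤ n * (e n / n) := Nat.mul_le_mul_left n (min_le_left _ _)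
      _ ≤ e n := Nat.mul_div_le (e n) n
  · refine squeeze_zero' (Eventually.of_forall fun n => by positivity) ?_
      (tendsto_inv_atTop_zero.comp (tendsto_natCast_atTop_atTop.comp hk))
    filter_upwards [eventually_ge_atTop N] with n hn
    exact rank_augAdj_blockCliques_div_le (two_pos.trans_le (hN n hn)) (hkn n)
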